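/- arXiv:2209.04219 — 2 statements merged into one kernel-verified Lean document; each statement's English description precedes it below -/
import Mathlib

section
/- Lemma (uniform contraction from the tolerance constraint): Let Ω be a symmetric positive definite n×n matrix, and let b, θ > 0 be such that γ(Ω, θ) := (1/2)[tr((I - θΩ⁻¹)⁻¹ - I) + log det(I - θΩ⁻¹)] = b, with I - θΩ⁻¹ positive definite. Then there exists a constant μ > 0, depending only on b and n, such that Ω - θI ≥ μΩ in the Loewner order. -/
noncomputable def gammaRS {n : ℕ} (Ω : Matrix (Fin n) (Fin n) ℝ) (θ : ℝ) : ℝ :=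
  (1 / 2) * (((1 - θ • Ω⁻¹)⁻¹ - 1).trace + Real.log (1 - θ • Ω⁻¹).det)

/-!
With `A = 1 - θ • Ω⁻¹` and eigenvalues `λᵢ > 0`, one has `2 γ(Ω, θ) = ∑ φ(λᵢ)` where
`φ(x) = x⁻¹ - 1 + log x ≥ 0`, so every `φ(λᵢ) ≤ 2b`. Since `log x ≥ -x⁻¹ / 2`, `φ(x) ≥ x⁻¹ / 2 - 1`,
hence `λᵢ ≥ (4b + 2)⁻¹ =: μ`, i.e. `A ≥ μ • 1`; conjugating by `Ω^{1/2}` gives `Ω - θ • 1 ≥ μ • Ω`.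
-/

namespace Real

lemma log_le_half_self {x : ℝ} (hx : 0 < x) : log x ≤ x / 2 := by
  have h := log_le_sub_one_of_pos (half_pos hx)
  rw [log_div hx.ne' two_ne_zero] at h
  linarith [log_two_lt_d9]

lemma inv_sub_one_add_log_nonneg {x : ℝ} (hx : 0 < x) : 0 ≤ x⁻¹ - 1 + log x := by
  linarith [one_sub_inv_le_log_of_pos hx]

lemma inv_le_of_inv_sub_one_add_log_le {x c : ℝ} (hx : 0 < x) (h : x⁻¹ - 1 + log x ≤ c) :
    (2 * c + 2)⁻¹ ≤ x := by
  have hlog : -(x⁻¹ / 2) ≤ log x := by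
    simpa [log_inv] using neg_le_neg (log_le_half_self (inv_pos.mpr hx))
  have hinv : x⁻¹ ≤ 2 * c + 2 := by linarith
  simpa using inv_anti₀ (inv_pos.mpr hx) hinv

end Real

namespace Matrix

open scoped ComplexOrder

variable {𝕜 n : Type*} [RCLike 𝕜] [Fintype n] [DecidableEq n] {A : Matrix n n 𝕜}

lemma IsHermitian.trace_cfc (hA : A.IsHermitian) (f : ℝ → ℝ) :
    (cfc f A).trace = ∑ i, (f (hA.eigenvalues i) : 𝕜) := by
  rw [hA.cfc_eq, IsHermitian.cfc, Unitary.conjStarAlgAut_apply, trace_mul_cycle]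
  simp [trace_diagonal]

lemma PosDef.inv_eq_cfc (hA : A.PosDef) : A⁻¹ = cfc (·⁻¹ : ℝ → ℝ) A := by
  refine inv_eq_left_inv ?_
  have hspec : ∀ x ∈ spectrum ℝ A, x ≠ 0 := by
    rw [hA.1.spectrum_real_eq_range_eigenvalues]
    rintro _ ⟨i, rfl⟩
    exact (hA.eigenvalues_pos i).ne'
  calc cfc (·⁻¹ : ℝ → ℝ) A * A = cfc (fun x : ℝ ↦ x⁻¹ * x) A := by
        rw [cfc_mul (·⁻¹) (fun x ↦ x) A (continuousOn_inv₀.mono hspec),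
          cfc_id' ℝ A hA.1.isSelfAdjoint]
    _ = cfc (fun _ : ℝ ↦ (1 : ℝ)) A := cfc_congr fun x hx ↦ inv_mul_cancel₀ (hspec x hx)
    _ = 1 := cfc_const_one ℝ A hA.1.isSelfAdjoint

lemma PosDef.trace_inv (hA : A.PosDef) : A⁻¹.trace = ∑ i, ((hA.1.eigenvalues i)⁻¹ : 𝕜) := by
  simp [hA.inv_eq_cfc, hA.1.trace_cfc]

lemma IsHermitian.posSemidef_sub_smul_one (hA : A.IsHermitian) {μ : ℝ}
    (h : ∀ i, μ ≤ hA.eigenvalues i) : (A - μ • 1).PosSemidef := by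
  open scoped MatrixOrder in
  have : algebraMap ℝ (Matrix n n 𝕜) μ ≤ A := by
    rw [algebraMap_le_iff_le_spectrum hA.isSelfAdjoint, hA.spectrum_real_eq_range_eigenvalues]
    rintro _ ⟨i, rfl⟩
    exact h i
  simpa [le_iff, Algebra.algebraMap_eq_smul_one] using this

lemma PosDef.exists_sqrt {Ω : Matrix n n 𝕜} (hΩ : Ω.PosDef) :
    ∃ S : Matrix n n 𝕜, S.IsHermitian ∧ S * S = Ω ∧ S * Ω⁻¹ * S = 1 := by
  open scoped MatrixOrder in
  refine ⟨CFC.sqrt Ω, (nonneg_iff_posSemidef.mp (CFC.sqrt_nonneg Ω)).isHermitian,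
    CFC.sqrt_mul_sqrt_self Ω hΩ.posSemidef.nonneg, ?_⟩
  set S := CFC.sqrt Ω
  have hSS : S * S = Ω := CFC.sqrt_mul_sqrt_self Ω hΩ.posSemidef.nonneg
  have hS : IsUnit S := isUnit_of_mul_isUnit_left (hSS ▸ hΩ.isUnit)
  have hdet := (isUnit_iff_isUnit_det S).mp hS
  rw [← hSS, mul_inv_rev, mul_assoc, mul_assoc, mul_nonsing_inv_cancel_left _ _ hdet,
    nonsing_inv_mul _ hdet]

lemma PosDef.posSemidef_sub_smul_one_sub_smul {Ω : Matrix n n 𝕜} (hΩ : Ω.PosDef) {θ μ : ℝ}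
    (h : (1 - θ • Ω⁻¹ - μ • 1).PosSemidef) : (Ω - θ • 1 - μ • Ω).PosSemidef := by
  obtain ⟨S, hS, hSS, hSΩS⟩ := hΩ.exists_sqrt
  have : Ω - θ • 1 - μ • Ω = S * (1 - θ • Ω⁻¹ - μ • 1) * Sᴴ := by
    rw [hS.eq]
    simp only [mul_sub, sub_mul, mul_one, Matrix.mul_smul, Matrix.smul_mul, hSS, hSΩS]
  exact this ▸ h.mul_mul_conjTranspose_same S

lemma PosDef.log_det {A : Matrix n n ℝ} (hA : A.PosDef) :
    Real.log A.det = ∑ i, Real.log (hA.1.eigenvalues i) := by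
  simp only [hA.1.det_eq_prod_eigenvalues, RCLike.ofReal_real_eq_id, id]
  exact Real.log_prod fun i _ ↦ (hA.eigenvalues_pos i).ne'

lemma PosDef.trace_inv_sub_one_add_log_det {A : Matrix n n ℝ} (hA : A.PosDef) :
    (A⁻¹ - 1).trace + Real.log A.det =
      ∑ i, ((hA.1.eigenvalues i)⁻¹ - 1 + Real.log (hA.1.eigenvalues i)) := by
  simp only [trace_sub, hA.trace_inv, trace_one, hA.log_det, Finset.sum_add_distrib,
    Finset.sum_sub_distrib, RCLike.ofReal_real_eq_id, id, Finset.sum_const, Finset.card_univ,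
    nsmul_eq_mul, mul_one]

end Matrix

theorem stmt_4 (n : ℕ) (b : ℝ) (hb : 0 < b) :
    ∃ μ : ℝ, 0 < μ ∧
      ∀ (Ω : Matrix (Fin n) (Fin n) ℝ) (θ : ℝ), Ω.PosDef → 0 < θ →
        (1 - θ • Ω⁻¹).PosDef → gammaRS Ω θ = b →
        (Ω - θ • (1 : Matrix (Fin n) (Fin n) ℝ) - μ • Ω).PosSemidef := by
  refine ⟨(4 * b + 2)⁻¹, by positivity, fun Ω θ hΩ _ hA hγ ↦ ?_⟩
  set ev := hA.1.eigenvalues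
  have hsum : ∑ i, ((ev i)⁻¹ - 1 + Real.log (ev i)) = 2 * b := by
    rw [← hA.trace_inv_sub_one_add_log_det]
    unfold gammaRS at hγ
    linarith
  have hev : ∀ i, (4 * b + 2)⁻¹ ≤ ev i := fun i ↦ by
    have hterm := Finset.single_le_sum
      (fun j _ ↦ Real.inv_sub_one_add_log_nonneg (hA.eigenvalues_pos j)) (Finset.mem_univ i)
    rw [hsum] at hterm
    convert Real.inv_le_of_inv_sub_one_add_log_le (hA.eigenvalues_pos i) hterm using 2
    ring
  exact hΩ.posSemidef_sub_smul_one_sub_smul (hA.1.posSemidef_sub_smul_one hev)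
end

section
/- For a fixed θ > 0, the map Ω ↦ γ(Ω, θ) := (1/2){tr[(I - θΩ⁻¹)⁻¹ - I] + log det(I - θΩ⁻¹)} is monotone decreasing with respect to the Loewner order on the set of symmetric matrices Ω with Ω > θI: if θI < Ω₁ ≤ Ω₂ then γ(Ω₂, θ) ≤ γ(Ω₁, θ). -/
open scoped MatrixOrder ComplexOrder

namespace Matrix

variable {ι : Type*} [Fintype ι] [DecidableEq ι]

theorem PosDef.inv_le_inv_of_le {𝕜 : Type*} [RCLike 𝕜] {A B : Matrix ι ι 𝕜} (hA : A.PosDef)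
    (hAB : A ≤ B) : B⁻¹ ≤ A⁻¹ := by
  have hB : B.PosDef := by simpa using hA.posSemidef_add hAB
  let := hA.isUnit.invertible
  let := hB.isUnit.invertible
  let := hA.inv.isUnit.invertible
  -- both inequalities say that `fromBlocks B 1 1 A⁻¹` is positive semidefinite
  have hSchurB := PosDef.fromBlocks₁₁ (1 : Matrix ι ι 𝕜) A⁻¹ hB
  have hSchurA := PosDef.fromBlocks₂₂ B (1 : Matrix ι ι 𝕜) hA.inv
  simp only [conjTranspose_one, one_mul, mul_one, inv_inv_of_invertible] at hSchurB hSchurA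
  exact hSchurB.1 (hSchurA.2 hAB)

theorem PosSemidef.log_det_one_add_le_trace {X : Matrix ι ι ℝ} (hX : X.PosSemidef) :
    Real.log (1 + X).det ≤ X.trace := by
  have hcfc : 1 + X = cfc (fun t : ℝ => 1 + t) X := by
    rw [cfc_add .., cfc_const_one ℝ X, cfc_id' ℝ X]
  have hdet : (1 + X).det = ∏ i, (1 + hX.1.eigenvalues i) := by
    rw [hcfc, hX.1.cfc_eq]
    simp [IsHermitian.cfc, -Unitary.conjStarAlgAut_apply]
  have hpos i : 0 < 1 + hX.1.eigenvalues i := by linarith [hX.eigenvalues_nonneg i]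
  rw [hdet, hX.1.trace_eq_sum_eigenvalues, Real.log_prod fun i _ => (hpos i).ne']
  simp only [RCLike.ofReal_real_eq_id, id]
  gcongr with i
  linarith [Real.log_le_sub_one_of_pos (hpos i)]

theorem log_det_add_le_log_det_add_trace {C D : Matrix ι ι ℝ} (hC : 1 ≤ C) (hD : 0 ≤ D) :
    Real.log (C + D).det ≤ Real.log C.det + D.trace := by
  have hCpos : C.PosDef := by simpa using PosDef.one.posSemidef_add hC
  have hCinv : C⁻¹ ≤ 1 := by simpa using PosDef.one.inv_le_inv_of_le hC
  set R := CFC.sqrt D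
  have hRR : R * R = D := CFC.sqrt_mul_sqrt_self D hD
  have hR : IsSelfAdjoint R := IsSelfAdjoint.of_nonneg (CFC.sqrt_nonneg D)
  set Y := R * C⁻¹ * R
  have hY : Y.PosSemidef :=
    nonneg_iff_posSemidef.1 (hR.conjugate_nonneg (nonneg_iff_posSemidef.2 hCpos.inv.posSemidef))
  have hYD : Y ≤ D := by simpa [hRR] using hR.conjugate_le_conjugate hCinv
  have hdet : (C + D).det = C.det * (1 + Y).det := by
    have hfac : C + D = C * (1 + C⁻¹ * R * R) := by
      rw [mul_add, mul_one, mul_assoc C⁻¹, mul_nonsing_inv_cancel_left _ _ hCpos.det_pos.ne'.isUnit,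
        hRR]
    rw [hfac, det_mul, det_one_add_mul_comm, ← mul_assoc]
  have htrace : Y.trace ≤ D.trace := by
    have := (le_iff.1 hYD).trace_nonneg
    rw [trace_sub] at this
    linarith
  calc Real.log (C + D).det = Real.log C.det + Real.log (1 + Y).det := by
        rw [hdet, Real.log_mul hCpos.det_pos.ne' (PosDef.one.add_posSemidef hY).det_pos.ne']
    _ ≤ Real.log C.det + D.trace := by
        gcongr
        exact hY.log_det_one_add_le_trace.trans htrace

theorem monotoneOn_trace_sub_log_det_one_add :
    MonotoneOn (fun X : Matrix ι ι ℝ => X.trace - Real.log (1 + X).det) {X | 0 ≤ X} := by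
  intro P hP Q _ hPQ
  have := log_det_add_le_log_det_add_trace (le_add_of_nonneg_right hP) (sub_nonneg.2 hPQ)
  rw [add_add_sub_cancel, trace_sub] at this
  dsimp only
  linarith

end Matrix

open Matrix

theorem gammaRS_eq {n : ℕ} {Ω : Matrix (Fin n) (Fin n) ℝ} {θ : ℝ} (hθ : 0 ≤ θ)
    (hB : (Ω - θ • 1).PosDef) :
    gammaRS Ω θ =
      (1 / 2) * ((θ • (Ω - θ • 1)⁻¹).trace - Real.log (1 + θ • (Ω - θ • 1)⁻¹).det) := by
  set B := Ω - θ • 1 with hBdef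
  have hΩ : Ω.PosDef := by simpa [B] using hB.add_posSemidef (PosSemidef.one.smul hθ)
  have hΩu : IsUnit Ω.det := hΩ.det_pos.ne'.isUnit
  have hBu : IsUnit B.det := hB.det_pos.ne'.isUnit
  have hleft : 1 - θ • Ω⁻¹ = Ω⁻¹ * B := by
    rw [mul_sub, nonsing_inv_mul _ hΩu, mul_smul_comm, mul_one]
  have hright : 1 + θ • B⁻¹ = B⁻¹ * Ω := by
    rw [show Ω = B + θ • 1 by rw [hBdef, sub_add_cancel], mul_add, nonsing_inv_mul _ hBu,
      mul_smul_comm, mul_one]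
  have hmul : (1 - θ • Ω⁻¹) * (1 + θ • B⁻¹) = 1 := by
    rw [hleft, hright, mul_assoc, mul_nonsing_inv_cancel_left _ _ hBu, nonsing_inv_mul _ hΩu]
  have hdet : (1 - θ • Ω⁻¹).det = (1 + θ • B⁻¹).det⁻¹ :=
    eq_inv_of_mul_eq_one_left (by rw [← det_mul, hmul, det_one])
  rw [gammaRS, inv_eq_right_inv hmul, hdet, Real.log_inv, add_sub_cancel_left]
  ring

theorem stmt_17_general {n : ℕ} (θ : ℝ) (hθ : 0 < θ)
    (Ω₁ Ω₂ : Matrix (Fin n) (Fin n) ℝ)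
    (h₁ : (Ω₁ - θ • (1 : Matrix (Fin n) (Fin n) ℝ)).PosDef)
    (h₂ : (Ω₂ - θ • (1 : Matrix (Fin n) (Fin n) ℝ)).PosDef)
    (hle : (Ω₂ - Ω₁).PosSemidef) :
    gammaRS Ω₂ θ ≤ gammaRS Ω₁ θ := by
  have hinv : (Ω₂ - θ • 1)⁻¹ ≤ (Ω₁ - θ • 1)⁻¹ :=
    h₁.inv_le_inv_of_le (by rwa [le_iff, sub_sub_sub_cancel_right])
  have hmono := monotoneOn_trace_sub_log_det_one_add
    (nonneg_iff_posSemidef.2 (h₂.inv.posSemidef.smul hθ.le))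
    (nonneg_iff_posSemidef.2 (h₁.inv.posSemidef.smul hθ.le))
    (smul_le_smul_of_nonneg_left hinv hθ.le)
  rw [gammaRS_eq hθ.le h₁, gammaRS_eq hθ.le h₂]
  dsimp only at hmono
  linarith

theorem stmt_17 {n : ℕ} (θ : ℝ) (hθ : 0 < θ)
    (Ω₁ Ω₂ : Matrix (Fin n) (Fin n) ℝ)
    (h₁ : (Ω₁ - θ • (1 : Matrix (Fin n) (Fin n) ℝ)).PosDef)
    (h₂ : (Ω₂ - θ • (1 : Matrix (Fin n) (Fin n) ℝ)).PosDef)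
    (hΩ₁ : Ω₁.PosDef) (hΩ₂ : Ω₂.PosDef)
    (hle : (Ω₂ - Ω₁).PosSemidef) :
    gammaRS Ω₂ θ ≤ gammaRS Ω₁ θ :=
  stmt_17_general θ hθ Ω₁ Ω₂ h₁ h₂ hle
end
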